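/- arXiv:1601.07805 — 4 statements merged into one kernel-verified Lean document; each statement's English description precedes it below -/
import Mathlib

section
/- For a two-dimensional cone σ in ℚ² generated by α=(1,0) and β=(-q,n), where n ≥ 1 and 1 ≤ q < n with gcd(n,q)=1, the dual cone σ^∨ = {r ∈ ℚ² : ⟨α,r⟩ ≥ 0 and ⟨β,r⟩ ≥ 0} is generated by r¹=[0,1] and rᵉ=[n,q]. -/
/-- The standard pairing on ℚ². -/
def pairQ (a b : ℚ × ℚ) : ℚ := a.1 * b.1 + a.2 * b.2

/-- The cone generated by two vectors in ℚ². -/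
def coneGen (v w : ℚ × ℚ) : Set (ℚ × ℚ) :=
  {s | ∃ l μ : ℚ, 0 ≤ l ∧ 0 ≤ μ ∧ s = l • v + μ • w}

/-- the dual of the cone σ = ⟨(1,0),(-q,n)⟩ is generated by
[0,1] and [n,q]. -/
theorem stmt0 (n q : ℤ) (hn : 1 ≤ n) (hq1 : 1 ≤ q) (hqn : q < n)
    (hgcd : Int.gcd n q = 1) :
    {r : ℚ × ℚ | ∀ s ∈ coneGen ((1 : ℚ), (0 : ℚ)) ((-q : ℚ), (n : ℚ)),
        0 ≤ pairQ s r}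
      = coneGen ((0 : ℚ), (1 : ℚ)) ((n : ℚ), (q : ℚ)) := by
  have hnQ : (0 : ℚ) < (n : ℚ) := by exact_mod_cast lt_of_lt_of_le one_pos hn
  ext r
  simp only [Set.mem_setOf_eq, coneGen, pairQ]
  constructor
  · intro h
    have h1 : 0 ≤ r.1 := by
      have := h ((1 : ℚ), (0 : ℚ)) ⟨1, 0, zero_le_one, le_refl 0, by simp⟩
      simpa [pairQ] using this
    have h2 : 0 ≤ -(q : ℚ) * r.1 + (n : ℚ) * r.2 := by
      have := h ((-q : ℚ), (n : ℚ)) ⟨0, 1, le_refl 0, zero_le_one, by simp⟩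
      simpa [pairQ] using this
    refine ⟨r.2 - (q : ℚ) * r.1 / n, r.1 / n, ?_, ?_, ?_⟩
    · rw [sub_nonneg, div_le_iff₀ hnQ]
      nlinarith
    · positivity
    · have : (n : ℚ) ≠ 0 := ne_of_gt hnQ
      ext <;> simp <;> field_simp <;> ring
  · rintro ⟨l, μ, hl, hμ, rfl⟩
    rintro s ⟨a, b, ha, hb, rfl⟩
    simp only [Prod.smul_fst, Prod.smul_snd, Prod.fst_add, Prod.snd_add,
      smul_eq_mul]
    nlinarith [mul_nonneg ha (mul_nonneg hμ hnQ.le), mul_nonneg hb (mul_nonneg hl hnQ.le),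
      mul_nonneg ha hl]
end

section
/- Let g, h, m be integers with m > 0, g < h, gcd(g,m) = gcd(h,m) = 1, and let α = (g,m), β = (h,m) ∈ ℤ². Set n := (h-g)·m and let q be defined by q ≡ (h-g)·c - 1 (mod n) where c is an integer with c·g ≡ -1 (mod m). Then n divides every coordinate of q·α + β, and |det(α,β)| = n. -/
/-- translation between the interval data (g,h,m) and the
classical invariants (n,q): with α = (g,m), β = (h,m), n = (h-g)·m,
c·g ≡ -1 (mod m) and q ≡ (h-g)·c - 1 (mod n), one has n | (q·α + β)
coordinatewise, and |det(α,β)| = n. -/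
theorem stmt2 (g h m c q : ℤ) (hm : 0 < m) (hgh : g < h)
    (hg : Int.gcd g m = 1) (hh : Int.gcd h m = 1)
    (hc : c * g ≡ -1 [ZMOD m])
    (hq : q ≡ (h - g) * c - 1 [ZMOD ((h - g) * m)]) :
    ((h - g) * m ∣ (q • ((g, m) : ℤ × ℤ) + ((h, m) : ℤ × ℤ)).1 ∧
     (h - g) * m ∣ (q • ((g, m) : ℤ × ℤ) + ((h, m) : ℤ × ℤ)).2) ∧
    |g * m - m * h| = (h - g) * m := by
  obtain ⟨t, ht⟩ : m ∣ c * g + 1 := by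
    have := (Int.ModEq.dvd hc)
    obtain ⟨u, hu⟩ := this
    exact ⟨-u, by linarith⟩
  obtain ⟨k, hk⟩ : (h - g) * m ∣ ((h - g) * c - 1) - q := Int.ModEq.dvd hq
  have hq' : q = (h - g) * c - 1 - (h - g) * m * k := by linarith
  refine ⟨⟨⟨t - k * g, ?_⟩, ⟨c - k * m, ?_⟩⟩, ?_⟩
  · simp only [Prod.fst, Prod.smul_mk, Prod.mk_add_mk, smul_eq_mul]
    rw [hq']
    nlinarith [ht]
  · simp only [Prod.snd, Prod.smul_mk, Prod.mk_add_mk, smul_eq_mul]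
    rw [hq']
    ring
  · rw [abs_of_nonpos (by nlinarith)]
    ring
end

section
/- Let m ≥ 2, g < 0 < h with gcd(g,m) = gcd(h,m) = 1, σ^∨ = ⟨[-m,h],[m,-g]⟩ ⊆ ℚ², R̄ = [0,1], and k ≥ 1 an integer. The half-open parallelogram Z := {r ∈ ℚ² : 0 ≤ ⟨(g,m),r⟩ < k·m and 0 ≤ ⟨(h,m),r⟩ < k·m} contains a point of the lattice M̃ := ℤ² + ℤ·[0,1/m] outside the line ℚ·[0,1] if and only if k·m > h - g. -/
/-- the half-open parallelogram
Z = {r : 0 ≤ ⟨(g,m),r⟩ < k·m, 0 ≤ ⟨(h,m),r⟩ < k·m} contains a point of the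
lattice M̃ = ℤ² + ℤ·[0,1/m] outside the line ℚ·[0,1] iff k·m > h - g. -/
theorem stmt9 (m g h k : ℤ) (hm : 2 ≤ m) (hg : g < 0) (hh : 0 < h)
    (hgm : Int.gcd g m = 1) (hhm : Int.gcd h m = 1) (hk : 1 ≤ k) :
    (∃ r : ℚ × ℚ,
      (∃ p : ℤ × ℤ, ∃ t : ℤ, r = ((p.1 : ℚ), (p.2 : ℚ) + (t : ℚ) / m)) ∧
      (0 ≤ (g : ℚ) * r.1 + (m : ℚ) * r.2 ∧
       (g : ℚ) * r.1 + (m : ℚ) * r.2 < (k : ℚ) * m) ∧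
      (0 ≤ (h : ℚ) * r.1 + (m : ℚ) * r.2 ∧
       (h : ℚ) * r.1 + (m : ℚ) * r.2 < (k : ℚ) * m) ∧
      r.1 ≠ 0)
    ↔ k * m > h - g := by
  have hm0 : (m : ℚ) ≠ 0 := by positivity
  constructor
  · rintro ⟨r, ⟨p, t, hr⟩, ⟨h1, h2⟩, ⟨h3, h4⟩, h5⟩
    have hr1 : r.1 = (p.1 : ℚ) := by rw [hr]
    rw [hr1] at h1 h2 h3 h4 h5
    have hp1 : p.1 ≠ 0 := by
      intro h0; apply h5; rw [h0]; norm_num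
    have hQ : ((h : ℚ) - g) * p.1 < (k : ℚ) * m := by nlinarith
    have hQ' : ((h : ℚ) - g) * (-p.1) < (k : ℚ) * m := by nlinarith
    rcases hp1.lt_or_gt with hlt | hlt
    · have h6 : p.1 ≤ -1 := by omega
      have : (p.1 : ℚ) ≤ -1 := by exact_mod_cast h6
      have : (h : ℚ) - g < (k : ℚ) * m := by nlinarith [sub_pos.mpr (show (g:ℚ) < h by exact_mod_cast hg.trans hh)]
      exact_mod_cast this
    · have : (1 : ℚ) ≤ p.1 := by exact_mod_cast hlt
      have : (h : ℚ) - g < (k : ℚ) * m := by nlinarith [sub_pos.mpr (show (g:ℚ) < h by exact_mod_cast hg.trans hh)]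
      exact_mod_cast this
  · intro hkm
    refine ⟨(1, ((-g : ℤ) : ℚ) / (m : ℚ)), ⟨(1, 0), -g, by push_cast; ring_nf⟩, ?_, ?_, one_ne_zero⟩
    all_goals
      have key : (m : ℚ) * (((-g : ℤ) : ℚ) / (m : ℚ)) = ((-g : ℤ) : ℚ) := mul_div_cancel₀ _ hm0
      rw [key]
      have hkm' : ((h : ℚ) - g) < (k : ℚ) * m := by exact_mod_cast hkm
      have hgQ : (g : ℚ) < h := by exact_mod_cast hg.trans hh
      have hkmQ : (0 : ℚ) < (k : ℚ) * m := by positivity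
      push_cast
      constructor <;> linarith
end

section
/- Let m ≥ 2 and let c be an integer with 1 ≤ c < m and c·g ≡ -1 (mod m) for a given g with gcd(g,m)=1. Then the smallest positive rational λ such that λ·[m,-g] - [0,1/m] ∈ ℤ² is λ = c/m, and the resulting lattice point is [c, -(g·c+1)/m]. -/
/-!
Integrality of the first coordinate of `λ • (m, -g) - (0, 1/m)` forces `λ = a / m` with `a ∈ ℤ`,
and integrality of the second then says `a * g ≡ -1 [ZMOD m]`. As `-c` is an inverse of `g`
modulo `m`, this pins down `a ≡ c [ZMOD m]`, and among positive integers in that class `c` is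
the least because `0 < c < m`.
-/

theorem Int.ModEq.modEq_of_mul_modEq_neg_one {m a c g : ℤ} (ha : a * g ≡ -1 [ZMOD m])
    (hc : c * g ≡ -1 [ZMOD m]) : a ≡ c [ZMOD m] :=
  calc a = a * -(-1) := by ring
    _ ≡ a * -(c * g) [ZMOD m] := (hc.neg.mul_left a).symm
    _ = c * -(a * g) := by ring
    _ ≡ c * -(-1) [ZMOD m] := ha.neg.mul_left c
    _ = c := by ring

theorem Int.ModEq.le_of_lt_of_pos {m a c : ℤ} (h : a ≡ c [ZMOD m]) (ha : 0 < a) (hc : c < m) :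
    c ≤ a := by
  by_contra! hac
  have := Int.le_of_dvd (by omega) (Int.modEq_iff_dvd.mp h)
  omega

theorem exists_smul_sub_eq_intCast_iff {m : ℤ} (hm : m ≠ 0) (g : ℤ) (l : ℚ) :
    (∃ p : ℤ × ℤ, l • ((m : ℚ), (-g : ℚ)) - ((0 : ℚ), 1 / (m : ℚ)) = ((p.1 : ℚ), (p.2 : ℚ))) ↔
      ∃ a : ℤ, l = a / m ∧ a * g ≡ -1 [ZMOD m] := by
  have hmQ : (m : ℚ) ≠ 0 := by exact_mod_cast hm
  simp only [Prod.smul_mk, Prod.mk_sub_mk, Prod.mk.injEq, smul_eq_mul, sub_zero, Int.modEq_iff_dvd]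
  constructor
  · rintro ⟨⟨a, k⟩, hla, hlk⟩
    have hl : l = a / m := by rw [← hla]; field_simp
    refine ⟨a, hl, k, ?_⟩
    subst hl
    field_simp at hlk
    exact_mod_cast (by push_cast; linear_combination hlk : ((-1 - a * g : ℤ) : ℚ) = m * k)
  · rintro ⟨a, rfl, k, hk⟩
    refine ⟨(a, k), by field_simp, ?_⟩
    field_simp
    have : ((-1 - a * g : ℤ) : ℚ) = m * k := by exact_mod_cast hk
    push_cast at this
    linear_combination this

theorem stmt10_general (m g c : ℤ)
    (hc1 : 1 ≤ c) (hcm : c < m) (hcg : c * g ≡ -1 [ZMOD m]) :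
    IsLeast {l : ℚ | 0 < l ∧
        ∃ p : ℤ × ℤ, l • ((m : ℚ), (-g : ℚ)) - ((0 : ℚ), 1 / (m : ℚ))
          = ((p.1 : ℚ), (p.2 : ℚ))} ((c : ℚ) / m) ∧
    ((c : ℚ) / m) • ((m : ℚ), (-g : ℚ)) - ((0 : ℚ), 1 / (m : ℚ))
      = ((c : ℚ), -((g * c + 1 : ℤ) : ℚ) / m) := by
  have hm0 : (0 : ℤ) < m := by omega
  have hmQ : (0 : ℚ) < m := by exact_mod_cast hm0
  refine ⟨⟨⟨by positivity, (exists_smul_sub_eq_intCast_iff hm0.ne' g _).mpr ⟨c, rfl, hcg⟩⟩, ?_⟩, ?_⟩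
  · rintro l ⟨hl, hlat⟩
    obtain ⟨a, rfl, ha⟩ := (exists_smul_sub_eq_intCast_iff hm0.ne' g l).mp hlat
    have ha0 : 0 < a := by exact_mod_cast (div_pos_iff_of_pos_right hmQ).mp hl
    have hca : c ≤ a := (ha.modEq_of_mul_modEq_neg_one hcg).le_of_lt_of_pos ha0 hcm
    gcongr
  · simp only [Prod.smul_mk, Prod.mk_sub_mk, smul_eq_mul, sub_zero, Prod.mk.injEq]
    push_cast
    constructor <;> field_simp
    ring

/-- the smallest positive rational λ with
λ·[m,-g] - [0,1/m] ∈ ℤ² is λ = c/m, and the resulting lattice point is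
[c, -(g·c+1)/m]. -/
theorem stmt10 (m g c : ℤ) (hm : 2 ≤ m) (hgm : Int.gcd g m = 1)
    (hc1 : 1 ≤ c) (hcm : c < m) (hcg : c * g ≡ -1 [ZMOD m]) :
    IsLeast {l : ℚ | 0 < l ∧
        ∃ p : ℤ × ℤ, l • ((m : ℚ), (-g : ℚ)) - ((0 : ℚ), 1 / (m : ℚ))
          = ((p.1 : ℚ), (p.2 : ℚ))} ((c : ℚ) / m) ∧
    ((c : ℚ) / m) • ((m : ℚ), (-g : ℚ)) - ((0 : ℚ), 1 / (m : ℚ))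
      = ((c : ℚ), -((g * c + 1 : ℤ) : ℚ) / m) :=
  stmt10_general m g c hc1 hcm hcg
end
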